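/- Let n ≥ 2 and let f : ℝⁿ → ℝ be twice continuously differentiable. Define G(x, t) = ∫_{S^{n−1}} f(x + t θ) dσ(θ) for x ∈ ℝⁿ and t > 0. Then G satisfies the Euler–Poisson–Darboux equation: for every x ∈ ℝⁿ and t > 0, ∂²G/∂t² (x, t) + ((n − 1)/t) ∂G/∂t (x, t) = Δₓ G(x, t). -/

import Mathlib

/-!
Differentiating under the integral, `∂ₜG = ∫ Df(x + tθ) θ`, `∂ₜ²G = ∫ D²f(x + tθ)(θ, θ)` and
`Δₓ G = ∫ tr D²f(x + tθ)`. The surface measure is invariant under the rotations `exp (s L)`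
generated by the skew maps `L v = ⟪a, v⟫ b - ⟪b, v⟫ a`, so `∫ Dg(θ)(L θ) dσ = 0` for every
`C¹` function `g`; for `g θ = Df(x + tθ)(L θ)` this reads `∫ t D²f(L θ, L θ) + Df(L² θ) dσ = 0`.
Summing over all pairs `(a, b)` of vectors of an orthonormal basis, `∑ L² θ = -2 (n - 1) θ` and
`∑ D²f(L θ, L θ) = 2 (‖θ‖² tr D²f - D²f(θ, θ))`, so on the unit sphere
`t (∫ tr D²f - ∫ D²f(θ, θ)) = (n - 1) ∫ Df θ`, which is the equation multiplied by `t`.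
The surface measure is finite because the sphere is covered by the radial projections of the
`2n` faces of the cube `[-1, 1]ⁿ`, Lipschitz images of an `(n - 1)`-dimensional cube.
-/

open MeasureTheory Metric Real

/-- The Euclidean Laplacian: sum of second derivatives along the standard
orthonormal basis directions. -/
noncomputable def euclideanLaplacian {n : ℕ} (f : EuclideanSpace ℝ (Fin n) → ℝ)
    (x : EuclideanSpace ℝ (Fin n)) : ℝ :=
  ∑ i : Fin n, deriv (deriv (fun t : ℝ => f (x + t • EuclideanSpace.single i 1))) 0

section CompactlyConcentrated

variable {α : Type*} [TopologicalSpace α] [T2Space α] [MeasurableSpace α] [OpensMeasurableSpace α]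
  {μ : Measure α} [IsFiniteMeasure μ] {K : Set α}

theorem Continuous.integrable_of_ae_mem_compact (hK : IsCompact K) (hμK : ∀ᵐ a ∂μ, a ∈ K)
    {h : α → ℝ} (hh : Continuous h) : Integrable h μ := by
  rw [← Measure.restrict_eq_self_of_ae_mem hμK]
  exact hh.continuousOn.integrableOn_compact hK

theorem hasDerivAt_integral_of_continuous_of_ae_mem_compact (hK : IsCompact K)
    (hμK : ∀ᵐ a ∂μ, a ∈ K) {F F' : ℝ → α → ℝ} (hF : Continuous fun p : ℝ × α => F p.1 p.2)
    (hF' : Continuous fun p : ℝ × α => F' p.1 p.2) (hFF' : ∀ s a, HasDerivAt (F · a) (F' s a) s)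
    (s₀ : ℝ) : HasDerivAt (fun s => ∫ a, F s a ∂μ) (∫ a, F' s₀ a ∂μ) s₀ := by
  obtain ⟨C, hC⟩ := ((isCompact_closedBall s₀ 1).prod hK).exists_bound_of_continuousOn
    hF'.continuousOn
  refine (hasDerivAt_integral_of_dominated_loc_of_deriv_le (ball_mem_nhds s₀ one_pos)
    (.of_forall fun s => (hF.comp (.prodMk_right s)).aestronglyMeasurable)
    ((hF.comp (.prodMk_right s₀)).integrable_of_ae_mem_compact hK hμK)
    (hF'.comp (.prodMk_right s₀)).aestronglyMeasurable ?_ (integrable_const C)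
    (ae_of_all _ fun a s _ => hFF' s a)).2
  filter_upwards [hμK] with a ha s hs
  exact hC (s, a) ⟨ball_subset_closedBall hs, ha⟩

variable {E : Type*} [NormedAddCommGroup E] [NormedSpace ℝ E] {c w : α → E}

theorem hasDerivAt_integral_comp_add_smul (hK : IsCompact K) (hμK : ∀ᵐ a ∂μ, a ∈ K)
    {φ : E → ℝ} (hφ : ContDiff ℝ 1 φ) (hc : Continuous c) (hw : Continuous w) (s : ℝ) :
    HasDerivAt (fun s => ∫ a, φ (c a + s • w a) ∂μ)
      (∫ a, fderiv ℝ φ (c a + s • w a) (w a) ∂μ) s := by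
  have := hφ.continuous_fderiv one_ne_zero
  refine hasDerivAt_integral_of_continuous_of_ae_mem_compact hK hμK
    (F := fun s a => φ (c a + s • w a)) (F' := fun s a => fderiv ℝ φ (c a + s • w a) (w a))
    (by fun_prop) (by fun_prop) (fun s a => ?_) s
  have hline : HasDerivAt (fun s : ℝ => c a + s • w a) (w a) s := by
    simpa using ((hasDerivAt_id s).smul_const (w a)).const_add (c a)
  exact (hφ.differentiable one_ne_zero _).hasFDerivAt.comp_hasDerivAt s hline

theorem deriv_deriv_integral_comp_add_smul (hK : IsCompact K) (hμK : ∀ᵐ a ∂μ, a ∈ K)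
    {φ : E → ℝ} (hφ : ContDiff ℝ 2 φ) (hc : Continuous c) (hw : Continuous w) (s : ℝ) :
    deriv (deriv fun s => ∫ a, φ (c a + s • w a) ∂μ) s =
      ∫ a, fderiv ℝ (fderiv ℝ φ) (c a + s • w a) (w a) (w a) ∂μ := by
  have hDφ : ContDiff ℝ 1 (fderiv ℝ φ) := hφ.fderiv_right (by norm_num)
  have := hDφ.continuous_fderiv one_ne_zero
  have := hDφ.continuous
  rw [funext fun s => (hasDerivAt_integral_comp_add_smul hK hμK (hφ.of_le (by norm_num))
    hc hw s).deriv]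
  refine (hasDerivAt_integral_of_continuous_of_ae_mem_compact hK hμK
    (F := fun s a => fderiv ℝ φ (c a + s • w a) (w a))
    (F' := fun s a => fderiv ℝ (fderiv ℝ φ) (c a + s • w a) (w a) (w a))
    (by fun_prop) (by fun_prop) (fun s a => ?_) s).deriv
  have hline : HasDerivAt (fun s : ℝ => c a + s • w a) (w a) s := by
    simpa using ((hasDerivAt_id s).smul_const (w a)).const_add (c a)
  exact ((hDφ.differentiable one_ne_zero _).hasFDerivAt.comp_hasDerivAt s hline).clm_apply
    (hasDerivAt_const s (w a)) |>.congr_deriv (by simp)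

theorem euclideanLaplacian_integral_add (hK : IsCompact K) (hμK : ∀ᵐ a ∂μ, a ∈ K) {n : ℕ}
    {f : EuclideanSpace ℝ (Fin n) → ℝ} (hf : ContDiff ℝ 2 f) {v : α → EuclideanSpace ℝ (Fin n)}
    (hv : Continuous v) (x : EuclideanSpace ℝ (Fin n)) :
    euclideanLaplacian (fun x' => ∫ a, f (x' + v a) ∂μ) x =
      ∫ a, ∑ i, fderiv ℝ (fderiv ℝ f) (x + v a) (EuclideanSpace.single i 1)
        (EuclideanSpace.single i 1) ∂μ := by
  have := (hf.fderiv_right (m := 1) (by norm_num)).continuous_fderiv one_ne_zero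
  rw [euclideanLaplacian, integral_finsetSum _ fun i _ =>
    (by fun_prop : Continuous _).integrable_of_ae_mem_compact hK hμK]
  refine Finset.sum_congr rfl fun i _ => ?_
  simp_rw [add_right_comm x]
  simpa using deriv_deriv_integral_comp_add_smul hK hμK hf (c := fun a => x + v a)
    (w := fun _ => EuclideanSpace.single i 1) (by fun_prop) continuous_const 0

end CompactlyConcentrated

section RotationGenerator

open scoped RealInnerProductSpace

variable {E : Type*} [NormedAddCommGroup E] [InnerProductSpace ℝ E]

/-- For orthonormal `a`, `b`, the generator of the rotations of the plane spanned by `a` and `b`. -/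
noncomputable def rotationGenerator (a b : E) : E →L[ℝ] E :=
  (innerSL ℝ a).smulRight b - (innerSL ℝ b).smulRight a

theorem rotationGenerator_apply (a b v : E) :
    rotationGenerator a b v = ⟪a, v⟫ • b - ⟪b, v⟫ • a := rfl

theorem rotationGenerator_mem_skewAdjoint [CompleteSpace E] (a b : E) :
    rotationGenerator a b ∈ skewAdjoint (E →L[ℝ] E) := by
  rw [skewAdjoint.mem_iff, ContinuousLinearMap.star_eq_adjoint]
  refine ((ContinuousLinearMap.eq_adjoint_iff _ _).2 fun v w => ?_).symm
  simp only [neg_apply, rotationGenerator_apply, inner_neg_left,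
    inner_sub_left, inner_sub_right, inner_smul_left, inner_smul_right, real_inner_comm,
    RCLike.conj_to_real]
  ring

variable {ι : Type*} [Fintype ι] (b : OrthonormalBasis ι ℝ E)

theorem OrthonormalBasis.sum_rotationGenerator_apply_apply (θ : E) :
    ∑ i, ∑ j, rotationGenerator (b i) (b j) (rotationGenerator (b i) (b j) θ) =
      (2 - 2 * Fintype.card ι : ℝ) • θ := by
  classical
  have hb := orthonormal_iff_ite.mp b.orthonormal
  simp only [rotationGenerator_apply, inner_sub_right, inner_smul_right, hb, sub_smul,
    mul_ite, mul_one, mul_zero, ite_smul, zero_smul, if_true, Finset.sum_sub_distrib,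
    Finset.sum_ite_eq, Finset.sum_ite_eq', Finset.mem_univ, Finset.sum_const, Finset.card_univ,
    ← Finset.smul_sum, b.sum_repr', ← Nat.cast_smul_eq_nsmul ℝ]
  module

theorem OrthonormalBasis.apply_apply_eq_sum_sum (B : E →L[ℝ] E →L[ℝ] ℝ) (θ : E) :
    B θ θ = ∑ i, ∑ j, ⟪b i, θ⟫ * ⟪b j, θ⟫ * B (b i) (b j) := by
  conv_lhs => rw [← b.sum_repr' θ]
  simp only [map_sum, map_smul, FunLike.coe_sum, Finset.sum_apply, smul_apply,
    smul_eq_mul, Finset.mul_sum]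
  rw [Finset.sum_comm]
  exact Finset.sum_congr rfl fun i _ => Finset.sum_congr rfl fun j _ => by ring

theorem OrthonormalBasis.sum_apply_rotationGenerator_apply (B : E →L[ℝ] E →L[ℝ] ℝ) (θ : E) :
    ∑ i, ∑ j, B (rotationGenerator (b i) (b j) θ) (rotationGenerator (b i) (b j) θ) =
      2 * (‖θ‖ ^ 2 * ∑ i, B (b i) (b i) - B θ θ) := by
  have hexpand : ∀ i j, B (rotationGenerator (b i) (b j) θ) (rotationGenerator (b i) (b j) θ) =
      ⟪b i, θ⟫ ^ 2 * B (b j) (b j) + ⟪b j, θ⟫ ^ 2 * B (b i) (b i) -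
        ⟪b i, θ⟫ * ⟪b j, θ⟫ * B (b i) (b j) - ⟪b j, θ⟫ * ⟪b i, θ⟫ * B (b j) (b i) := by
    intro i j
    simp only [rotationGenerator_apply, map_sub, map_smul, sub_apply, smul_apply, smul_eq_mul]
    ring
  have hswap := b.apply_apply_eq_sum_sum B θ
  rw [Finset.sum_comm] at hswap
  simp only [hexpand, Finset.sum_add_distrib, Finset.sum_sub_distrib, ← Finset.sum_mul,
    ← Finset.mul_sum, b.sum_sq_inner_right, ← b.apply_apply_eq_sum_sum, ← hswap]
  ring

end RotationGenerator

section Rotations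

variable {E : Type*} [NormedAddCommGroup E] [InnerProductSpace ℝ E]
  [MeasurableSpace E] [BorelSpace E] {μ : Measure E} [IsFiniteMeasure μ] {K : Set E}

theorem integral_fderiv_apply_eq_zero_of_mem_skewAdjoint [CompleteSpace E] (hK : IsCompact K)
    (hμK : ∀ᵐ θ ∂μ, θ ∈ K) (hμ : ∀ U : E ≃ₗᵢ[ℝ] E, MeasurePreserving U μ μ) {g : E → ℝ}
    (hg : ContDiff ℝ 1 g) {T : E →L[ℝ] E} (hT : T ∈ skewAdjoint (E →L[ℝ] E)) :
    ∫ θ, fderiv ℝ g θ (T θ) ∂μ = 0 := by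
  -- `NormedSpace.exp_mem_unitary_of_mem_skewAdjoint` is stated for `ℚ`-algebras
  let : NormedAlgebra ℚ (E →L[ℝ] E) := .restrictScalars ℚ ℝ _
  set U : ℝ → E →L[ℝ] E := fun s => NormedSpace.exp (s • T) with hU
  have hinv : ∀ s, ∫ θ, g (U s θ) ∂μ = ∫ θ, g θ ∂μ := fun s =>
    let V := Unitary.linearIsometryEquiv
      ⟨U s, NormedSpace.exp_mem_unitary_of_mem_skewAdjoint (skewAdjoint.smul_mem s hT)⟩
    (hμ V).integral_comp V.toHomeomorph.measurableEmbedding g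
  have hUd : ∀ s θ, HasDerivAt (fun s => U s θ) ((U s * T) θ) s := fun s θ => by
    simpa using (hasDerivAt_exp_smul_const T s).clm_apply (hasDerivAt_const s θ)
  have hUc : Continuous U :=
    continuous_iff_continuousAt.2 fun s => (hasDerivAt_exp_smul_const T s).continuousAt
  have := hg.continuous_fderiv one_ne_zero
  have hderiv := hasDerivAt_integral_of_continuous_of_ae_mem_compact hK hμK
    (F := fun s θ => g (U s θ)) (F' := fun s θ => fderiv ℝ g (U s θ) ((U s * T) θ))
    (by fun_prop) (by fun_prop)
    (fun s θ => (hg.differentiable one_ne_zero _).hasFDerivAt.comp_hasDerivAt s (hUd s θ)) 0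
  rw [funext hinv] at hderiv
  simpa [hU] using hderiv.unique (hasDerivAt_const 0 _)

theorem integral_hessian_add_fderiv_eq_zero_of_mem_skewAdjoint [CompleteSpace E]
    (hK : IsCompact K) (hμK : ∀ᵐ θ ∂μ, θ ∈ K)
    (hμ : ∀ U : E ≃ₗᵢ[ℝ] E, MeasurePreserving U μ μ) {f : E → ℝ} (hf : ContDiff ℝ 2 f)
    (x : E) (t : ℝ) {T : E →L[ℝ] E} (hT : T ∈ skewAdjoint (E →L[ℝ] E)) :
    ∫ θ, (fderiv ℝ f (x + t • θ) (T (T θ)) +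
      t * fderiv ℝ (fderiv ℝ f) (x + t • θ) (T θ) (T θ)) ∂μ = 0 := by
  have hDf : ContDiff ℝ 1 (fderiv ℝ f) := hf.fderiv_right (by norm_num)
  have hg : ContDiff ℝ 1 fun θ => fderiv ℝ f (x + t • θ) (T θ) := by fun_prop
  rw [← integral_fderiv_apply_eq_zero_of_mem_skewAdjoint hK hμK hμ hg hT]
  congr 1 with θ
  have haff : HasFDerivAt (fun θ : E => x + t • θ) (t • ContinuousLinearMap.id ℝ E) θ :=
    ((hasFDerivAt_id θ).const_smul t).const_add x
  have hgθ : HasFDerivAt (fun θ => fderiv ℝ f (x + t • θ) (T θ)) (_ : E →L[ℝ] ℝ) θ :=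
    ((hDf.differentiable one_ne_zero _).hasFDerivAt.comp θ haff).clm_apply T.hasFDerivAt
  rw [hgθ.fderiv]
  simp

theorem mul_integral_sum_hessian_eq [FiniteDimensional ℝ E]
    (hμS : ∀ᵐ θ ∂μ, θ ∈ sphere (0 : E) 1) (hμ : ∀ U : E ≃ₗᵢ[ℝ] E, MeasurePreserving U μ μ)
    {f : E → ℝ} (hf : ContDiff ℝ 2 f) (x : E) (t : ℝ) {ι : Type*} [Fintype ι]
    (b : OrthonormalBasis ι ℝ E) :
    t * ∫ θ, ∑ i, fderiv ℝ (fderiv ℝ f) (x + t • θ) (b i) (b i) ∂μ =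
      t * ∫ θ, fderiv ℝ (fderiv ℝ f) (x + t • θ) θ θ ∂μ +
        (Fintype.card ι - 1) * ∫ θ, fderiv ℝ f (x + t • θ) θ ∂μ := by
  set R := fun i j => rotationGenerator (b i) (b j)
  have hDf : ContDiff ℝ 1 (fderiv ℝ f) := hf.fderiv_right (by norm_num)
  have := hDf.continuous
  have := hDf.continuous_fderiv one_ne_zero
  have hint : ∀ {h : E → ℝ}, Continuous h → Integrable h μ :=
    fun hh => hh.integrable_of_ae_mem_compact (isCompact_sphere 0 1) hμS
  have hrot : ∫ θ, ∑ i, ∑ j, (fderiv ℝ f (x + t • θ) (R i j (R i j θ)) +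
      t * fderiv ℝ (fderiv ℝ f) (x + t • θ) (R i j θ) (R i j θ)) ∂μ = 0 := by
    rw [integral_finsetSum _ fun i _ => integrable_finsetSum _ fun j _ => hint (by fun_prop)]
    refine Finset.sum_eq_zero fun i _ => ?_
    rw [integral_finsetSum _ fun j _ => hint (by fun_prop)]
    exact Finset.sum_eq_zero fun j _ => integral_hessian_add_fderiv_eq_zero_of_mem_skewAdjoint
      (isCompact_sphere 0 1) hμS hμ hf x t (rotationGenerator_mem_skewAdjoint _ _)
  have hpointwise : ∀ᵐ θ ∂μ, ∑ i, ∑ j, (fderiv ℝ f (x + t • θ) (R i j (R i j θ)) +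
      t * fderiv ℝ (fderiv ℝ f) (x + t • θ) (R i j θ) (R i j θ)) =
      2 * (t * (∑ i, fderiv ℝ (fderiv ℝ f) (x + t • θ) (b i) (b i) -
        fderiv ℝ (fderiv ℝ f) (x + t • θ) θ θ) - (Fintype.card ι - 1) *
          fderiv ℝ f (x + t • θ) θ) := by
    filter_upwards [hμS] with θ hθ
    rw [mem_sphere_zero_iff_norm] at hθ
    simp only [Finset.sum_add_distrib, ← Finset.mul_sum, ← map_sum, R,
      b.sum_apply_rotationGenerator_apply, b.sum_rotationGenerator_apply_apply, map_smul,
      smul_eq_mul, hθ]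
    ring
  rw [integral_congr_ae hpointwise, integral_const_mul,
    integral_sub ((hint (by fun_prop)).const_mul _) ((hint (by fun_prop)).const_mul _),
    integral_const_mul, integral_const_mul,
    integral_sub (integrable_finsetSum _ fun i _ => hint (by fun_prop)) (hint (by fun_prop))]
    at hrot
  linarith

end Rotations

theorem lipschitzOnWith_inv_norm_smul {E : Type*} [NormedAddCommGroup E] [NormedSpace ℝ E] :
    LipschitzOnWith 2 (fun x : E => ‖x‖⁻¹ • x) {x | 1 ≤ ‖x‖} := by
  refine LipschitzOnWith.of_dist_le_mul fun x hx y hy => ?_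
  simp only [Set.mem_ofPred_eq] at hx hy
  have hx0 : 0 < ‖x‖ := one_pos.trans_le hx
  have hy0 : 0 < ‖y‖ := one_pos.trans_le hy
  have hsplit : ‖x‖⁻¹ • x - ‖y‖⁻¹ • y = ‖x‖⁻¹ • (x - y) + (‖x‖⁻¹ - ‖y‖⁻¹) • y := by
    module
  have h1 : ‖‖x‖⁻¹ • (x - y)‖ ≤ ‖x - y‖ := by
    rw [norm_smul, norm_inv, norm_norm]
    exact mul_le_of_le_one_left (norm_nonneg _) (inv_le_one_of_one_le₀ hx)
  have h2 : ‖(‖x‖⁻¹ - ‖y‖⁻¹) • y‖ ≤ ‖x - y‖ := by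
    rw [norm_smul, Real.norm_eq_abs, inv_sub_inv hx0.ne' hy0.ne', abs_div,
      abs_of_pos (mul_pos hx0 hy0), div_mul_eq_mul_div, mul_comm ‖x‖, ← div_div,
      mul_div_cancel_right₀ _ hy0.ne']
    calc |‖y‖ - ‖x‖| / ‖x‖ ≤ |‖y‖ - ‖x‖| := div_le_self (abs_nonneg _) hx
      _ ≤ ‖x - y‖ := by rw [norm_sub_rev]; exact abs_norm_sub_norm_le y x
  rw [dist_eq_norm, dist_eq_norm, hsplit, NNReal.coe_ofNat, two_mul]
  exact (norm_add_le _ _).trans (add_le_add h1 h2)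

noncomputable def cubeFace {m : ℕ} (i : Fin (m + 1)) (c : ℝ) (y : Fin m → ℝ) :
    EuclideanSpace ℝ (Fin (m + 1)) :=
  WithLp.toLp 2 (i.insertNth c y)

theorem one_le_norm_cubeFace {m : ℕ} (i : Fin (m + 1)) {c : ℝ} (hc : |c| = 1)
    (y : Fin m → ℝ) : 1 ≤ ‖cubeFace i c y‖ := by
  simpa [cubeFace, hc] using PiLp.norm_apply_le (cubeFace i c y) i

theorem sphere_subset_biUnion_image_cubeFace (m : ℕ) :
    sphere (0 : EuclideanSpace ℝ (Fin (m + 1))) 1 ⊆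
      ⋃ p ∈ (Set.univ : Set (Fin (m + 1))) ×ˢ ({-1, 1} : Set ℝ),
        (fun y => ‖cubeFace p.1 p.2 y‖⁻¹ • cubeFace p.1 p.2 y) '' closedBall 0 1 := by
  intro θ hθ
  rw [mem_sphere_zero_iff_norm] at hθ
  obtain ⟨i, -, hi⟩ := Finset.univ.exists_max_image (fun k => |θ k|) Finset.univ_nonempty
  have hθi : 0 < |θ i| := by
    by_contra! h
    have : θ = 0 := by
      ext k
      simpa using (hi k (Finset.mem_univ k)).trans h
    simp [this] at hθ
  set v : EuclideanSpace ℝ (Fin (m + 1)) := |θ i|⁻¹ • θ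
  have hv : ∀ k, |v k| = |θ k| / |θ i| := fun k => by
    simp [v, abs_mul, abs_inv, div_eq_inv_mul]
  have hvi : v i = 1 ∨ v i = -1 := (abs_eq zero_le_one).1 ((hv i).trans (div_self hθi.ne'))
  refine Set.mem_biUnion (x := (i, v i)) ⟨Set.mem_univ i, by simp [or_comm, hvi]⟩
    ⟨i.removeNth v.ofLp, ?_, ?_⟩
  · rw [mem_closedBall_zero_iff, pi_norm_le_iff_of_nonneg zero_le_one]
    intro j
    rw [Fin.removeNth_apply, Real.norm_eq_abs, hv, div_le_one hθi]
    exact hi _ (Finset.mem_univ _)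
  · have hface : cubeFace i (v i) (i.removeNth v.ofLp) = v := by
      simp [cubeFace]
    simp only [hface, v, norm_smul, norm_inv, Real.norm_eq_abs, abs_abs, hθ, mul_one, inv_inv,
      smul_smul, mul_inv_cancel₀ hθi.ne', one_smul]

theorem hausdorffMeasure_sphere_lt_top (n : ℕ) :
    μH[(n : ℝ) - 1] (sphere (0 : EuclideanSpace ℝ (Fin n)) 1) < ⊤ := by
  rcases n with _ | m
  · simp [sphere_eq_empty_of_subsingleton]
  rw [Nat.cast_succ, add_sub_cancel_right]
  have hcube : μH[(m : ℝ)] (closedBall (0 : Fin m → ℝ) 1) < ⊤ := by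
    have : (μH[(m : ℝ)] : Measure (Fin m → ℝ)) = volume := by
      simpa using hausdorffMeasure_pi_real (ι := Fin m)
    rw [this]
    exact measure_closedBall_lt_top
  refine (measure_mono (sphere_subset_biUnion_image_cubeFace m)).trans_lt
    (measure_biUnion_lt_top (Set.finite_univ.prod (Set.toFinite _)) fun p hp => ?_)
  have hc : |p.2| = 1 := by
    rcases (Set.mem_prod.1 hp).2 with h | h <;> simp_all
  have hinsert : Isometry (p.1.insertNth (α := fun _ => ℝ) p.2) :=
    Isometry.of_dist_eq fun y y' => by
      rw [Fin.dist_insertNth_insertNth, dist_self, max_eq_right dist_nonneg]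
  have hface := (PiLp.lipschitzWith_toLp 2 (fun _ : Fin (m + 1) => ℝ)).comp hinsert.lipschitz
  have hlip := lipschitzOnWith_inv_norm_smul.comp hface.lipschitzOnWith
    (fun y _ => one_le_norm_cubeFace p.1 hc y) (s := closedBall 0 1)
  refine (hlip.hausdorffMeasure_image_le (Nat.cast_nonneg m)).trans_lt
    (ENNReal.mul_lt_top (ENNReal.rpow_lt_top_of_nonneg (Nat.cast_nonneg m) ENNReal.coe_ne_top)
      hcube)

theorem measurePreserving_hausdorffMeasure_restrict_sphere {E : Type*}
    [NormedAddCommGroup E] [NormedSpace ℝ E] [MeasurableSpace E] [BorelSpace E]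
    (U : E ≃ₗᵢ[ℝ] E) (d r : ℝ) :
    MeasurePreserving U (μH[d].restrict (sphere 0 r)) (μH[d].restrict (sphere 0 r)) := by
  have := (U.toIsometryEquiv.measurePreserving_hausdorffMeasure d).restrict_preimage
    (isClosed_sphere (x := (0 : E)) (ε := r)).measurableSet
  rwa [LinearIsometryEquiv.coe_toIsometryEquiv, U.preimage_sphere, map_zero] at this

instance isFiniteMeasure_hausdorffMeasure_restrict_sphere (n : ℕ) :
    IsFiniteMeasure ((μH[(n : ℝ) - 1]).restrict (sphere (0 : EuclideanSpace ℝ (Fin n)) 1)) :=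
  isFiniteMeasure_restrict.2 (hausdorffMeasure_sphere_lt_top n).ne

theorem euler_poisson_darboux_equation_general
    (n : ℕ)
    (f : EuclideanSpace ℝ (Fin n) → ℝ)
    (hf : ContDiff ℝ 2 f)
    (G : EuclideanSpace ℝ (Fin n) → ℝ → ℝ)
    (hG : ∀ x t, G x t =
      ∫ θ in sphere (0 : EuclideanSpace ℝ (Fin n)) 1, f (x + t • θ) ∂(μH[(n : ℝ) - 1])) :
    ∀ x : EuclideanSpace ℝ (Fin n), ∀ t : ℝ, 0 < t →
      deriv (deriv (G x)) t + ((n - 1 : ℝ) / t) * deriv (G x) t =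
        euclideanLaplacian (fun x' => G x' t) x := by
  intro x t ht
  set σ := (μH[(n : ℝ) - 1]).restrict (sphere (0 : EuclideanSpace ℝ (Fin n)) 1)
  have hσS : ∀ᵐ θ ∂σ, θ ∈ sphere 0 1 := ae_restrict_mem isClosed_sphere.measurableSet
  have hK := isCompact_sphere (0 : EuclideanSpace ℝ (Fin n)) 1
  have hradial := mul_integral_sum_hessian_eq hσS
    (fun U => measurePreserving_hausdorffMeasure_restrict_sphere U _ _) hf x t
    (EuclideanSpace.basisFun (Fin n) ℝ)
  simp only [EuclideanSpace.basisFun_apply, Fintype.card_fin] at hradial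
  rw [show (fun x' => G x' t) = fun x' => ∫ θ, f (x' + t • θ) ∂σ from funext fun x' => hG x' t,
    euclideanLaplacian_integral_add hK hσS hf (continuous_const_smul t),
    show G x = fun s => ∫ θ, f (x + s • θ) ∂σ from funext (hG x),
    (hasDerivAt_integral_comp_add_smul hK hσS (hf.of_le (by norm_num)) (c := fun _ => x)
      (w := fun θ => θ) continuous_const continuous_id t).deriv,
    deriv_deriv_integral_comp_add_smul hK hσS hf (c := fun _ => x) (w := fun θ => θ)
      continuous_const continuous_id t]
  field_simp
  linarith

/-- The spherical means `G(x,t) = ∫_{S^{n-1}} f(x + tθ) dσ(θ)` of a `C²` function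
`f : ℝⁿ → ℝ` satisfy the Euler–Poisson–Darboux equation
`G_tt + ((n-1)/t) G_t = Δ_x G` for `t > 0`. -/
theorem euler_poisson_darboux_equation
    (n : ℕ) (hn : 2 ≤ n)
    (f : EuclideanSpace ℝ (Fin n) → ℝ)
    (hf : ContDiff ℝ 2 f)
    (G : EuclideanSpace ℝ (Fin n) → ℝ → ℝ)
    (hG : ∀ x t, G x t =
      ∫ θ in sphere (0 : EuclideanSpace ℝ (Fin n)) 1, f (x + t • θ) ∂(μH[(n : ℝ) - 1])) :
    ∀ x : EuclideanSpace ℝ (Fin n), ∀ t : ℝ, 0 < t →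
      deriv (deriv (G x)) t + ((n - 1 : ℝ) / t) * deriv (G x) t =
        euclideanLaplacian (fun x' => G x' t) x :=
  euler_poisson_darboux_equation_general n f hf G hG
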